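/- arXiv:1502.04309 — 2 statements merged into one kernel-verified Lean document; each statement's English description precedes it below -/
import Mathlib

section
/- Under Assumption (a), let r ∈ Σ_m and let p_0 ∈ ℝ^{Z_m} maximize p ↦ Ξ_μ(p) − Σ_z p_z r_z. Then every minimizer (μ_z) ∈ 𝒫_X^r(μ) of Σ_{z∈Z_m} ∫_X c¹(x,z) dμ_z(x) satisfies μ_z = μ restricted to A_z(p_0) for every z ∈ Z_m; in particular the minimizing partition is unique and is a strong partition (each μ_z is the restriction of μ to a Borel set, these sets being μ-essentially disjoint with union X). -/
/-!
Lowering `p₀ z` by `ε` raises `-∑ p r` by `ε r z` and lowers `Ξ_μ` by at most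
`ε μ{c¹(·,z) + p₀ z < ξ¹(p₀,·) + ε}`, so dual optimality of `p₀` forces `μ(A_z(p₀)) ≥ r z`.
The cells are μ-a.e. disjoint by Assumption (a) and cover `X`, hence carry exactly the masses
`r z`, and their restrictions form an admissible partition. For any admissible partition the cost
is `Ξ_μ(p₀) - ∑ p₀ r` plus the nonnegative gap `∑_z ∫ (c¹(·,z) + p₀ z - ξ¹(p₀,·)) dμ_z`, which
vanishes on the cell partition. A minimizer thus has zero gap, so each `μ_z` lives on
`A_z(p₀)`; as `μ_z ≤ μ` and both have mass `r z`, `μ_z = μ|A_z(p₀)`.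
-/

open MeasureTheory Filter Topology Set Function

noncomputable section

/-- `lowerEnvelope c p` is the paper's `ξ¹(p, ·)` and `argminSet c p z` its `A_z(p)`. -/
def lowerEnvelope {X ι : Type*} (c : X → ι → ℝ) (p : ι → ℝ) (x : X) : ℝ := ⨅ z, c x z + p z

def argminSet {X ι : Type*} (c : X → ι → ℝ) (p : ι → ℝ) (z : ι) : Set X :=
  {x | c x z + p z = lowerEnvelope c p x}

end

theorem MeasureTheory.Measure.le_of_finset_sum_eq {X ι : Type*} [MeasurableSpace X]
    {μ : Measure X} {s : Finset ι} {ρ : ι → Measure X} (hρ : ∑ z ∈ s, ρ z = μ) {z : ι}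
    (hz : z ∈ s) : ρ z ≤ μ :=
  hρ ▸ Finset.single_le_sum (fun _ _ => Measure.zero_le _) hz

theorem MeasureTheory.Measure.eq_restrict_of_le_of_ae_mem {X : Type*} [MeasurableSpace X]
    {μ ρ : Measure X} [IsFiniteMeasure μ] {s : Set X} (hle : ρ ≤ μ) (hs : ∀ᵐ x ∂ρ, x ∈ s)
    (huniv : ρ univ = μ s) : ρ = μ.restrict s := by
  have : IsFiniteMeasure ρ := isFiniteMeasure_of_le μ hle
  rw [← Measure.restrict_eq_self_of_ae_mem hs]
  refine Measure.eq_of_le_of_measure_univ_eq (Measure.restrict_mono subset_rfl hle) ?_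
  rw [Measure.restrict_apply_univ, Measure.restrict_apply_univ, ← huniv]
  exact measure_congr (eventuallyEq_univ.2 hs)

theorem MeasureTheory.tendsto_measureReal_setOf_lt_one_div_add_one {X : Type*}
    [MeasurableSpace X] {μ : Measure X} [IsFiniteMeasure μ] {g : X → ℝ} (hg : Measurable g) :
    Tendsto (fun n : ℕ => μ.real {x | g x < 1 / (n + 1)}) atTop (𝓝 (μ.real {x | g x ≤ 0})) := by
  have hinter : ⋂ n : ℕ, {x | g x < 1 / (n + 1)} = {x | g x ≤ 0} := by
    ext x
    simp only [mem_iInter, mem_ofPred_eq]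
    refine ⟨fun h => not_lt.1 fun hpos => ?_, fun h n => h.trans_lt Nat.one_div_pos_of_nat⟩
    obtain ⟨n, hn⟩ := exists_nat_one_div_lt hpos
    exact (h n).not_gt hn
  have hanti : Antitone fun n : ℕ => {x | g x < 1 / (n + 1)} := fun m n hmn x (hx : g x < _) =>
    show g x < _ from hx.trans_le (Nat.one_div_le_one_div hmn)
  have := tendsto_measure_iInter_atTop (μ := μ)
    (fun n => (measurableSet_lt hg measurable_const).nullMeasurableSet) hanti
    ⟨0, measure_ne_top μ _⟩
  rw [hinter] at this
  exact (ENNReal.tendsto_toReal (measure_ne_top μ _)).comp this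

section Cells

variable {X ι : Type*} [MeasurableSpace X] {μ : Measure X} (c : X → ι → ℝ) (p : ι → ℝ)

/-- Two cells meet only where `c · z - c · z'` takes the value `p z' - p z`. -/
theorem aedisjoint_argminSet
    (hlevel : ∀ (t : ℝ) (z z' : ι), z ≠ z' → μ {x | c x z - c x z' = t} = 0) :
    Pairwise (AEDisjoint μ on argminSet c p) := by
  intro z z' hzz'
  refine measure_mono_null (fun x hx => ?_) (hlevel (p z' - p z) z z' hzz')
  have : c x z + p z = c x z' + p z' := hx.1.trans hx.2.symm
  show c x z - c x z' = p z' - p z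
  linarith

theorem integral_restrict_argminSet_sub_lowerEnvelope (z : ι) :
    ∫ x in argminSet c p z, (c x z + p z - lowerEnvelope c p x) ∂μ = 0 :=
  setIntegral_eq_zero_of_forall_eq_zero fun _ hx => sub_eq_zero.2 hx

end Cells

section FiniteIndex

variable {X ι : Type*} [Fintype ι] (c : X → ι → ℝ) (p : ι → ℝ)

theorem lowerEnvelope_le (x : X) (z : ι) : lowerEnvelope c p x ≤ c x z + p z :=
  ciInf_le (Set.finite_range _).bddBelow z

theorem exists_eq_lowerEnvelope [Nonempty ι] (x : X) : ∃ z, c x z + p z = lowerEnvelope c p x :=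
  exists_eq_ciInf_of_finite

theorem mem_argminSet_iff_le {x : X} {z : ι} :
    x ∈ argminSet c p z ↔ c x z + p z ≤ lowerEnvelope c p x :=
  ⟨le_of_eq, fun h => h.antisymm (lowerEnvelope_le c p x z)⟩

theorem iUnion_argminSet [Nonempty ι] : ⋃ z, argminSet c p z = univ :=
  eq_univ_of_forall fun x => mem_iUnion.2 (exists_eq_lowerEnvelope c p x)

theorem lowerEnvelope_sub_lowerEnvelope_sub_single_le [Nonempty ι] [DecidableEq ι] {ε : ℝ}
    (hε : 0 ≤ ε) (z : ι) (x : X) :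
    lowerEnvelope c p x - lowerEnvelope c (p - Pi.single z ε) x ≤
      {y | c y z + p z < lowerEnvelope c p y + ε}.indicator (fun _ => ε) x := by
  by_cases hx : c x z + p z < lowerEnvelope c p x + ε
  · rw [indicator_of_mem (s := {y | c y z + p z < lowerEnvelope c p y + ε}) hx, sub_le_comm]
    refine le_ciInf fun w => ?_
    have := lowerEnvelope_le c p x w
    have : Pi.single (M := fun _ => ℝ) z ε w ≤ ε := by
      by_cases hw : w = z <;> simp [hw, hε]
    simp only [Pi.sub_apply]
    linarith
  · rw [indicator_of_notMem (s := {y | c y z + p z < lowerEnvelope c p y + ε}) hx, sub_nonpos]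
    refine le_ciInf fun w => ?_
    by_cases hw : w = z
    · subst hw
      simp only [Pi.sub_apply, Pi.single_eq_same]
      linarith [not_lt.1 hx]
    · simpa [hw] using lowerEnvelope_le c p x w

variable [MeasurableSpace X] {μ : Measure X}

theorem measurable_lowerEnvelope (hc : ∀ z, Measurable fun x => c x z) :
    Measurable (lowerEnvelope c p) :=
  .iInf fun z => (hc z).add_const _

theorem measurableSet_argminSet (hc : ∀ z, Measurable fun x => c x z) (z : ι) :
    MeasurableSet (argminSet c p z) :=
  measurableSet_eq_fun ((hc z).add_const _) (measurable_lowerEnvelope c p hc)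

theorem integrable_lowerEnvelope [Nonempty ι] [IsFiniteMeasure μ]
    (hint : ∀ z, Integrable (fun x => c x z) μ) : Integrable (lowerEnvelope c p) μ := by
  have hbound : Integrable (fun x => ∑ z, |c x z + p z|) μ :=
    integrable_finsetSum _ fun z _ => ((hint z).add (integrable_const (p z))).abs
  refine hbound.mono'
    (AEMeasurable.iInf fun z => (hint z).aemeasurable.add_const _).aestronglyMeasurable
    (ae_of_all _ fun x => ?_)
  obtain ⟨w, hw⟩ := exists_eq_lowerEnvelope c p x
  rw [Real.norm_eq_abs, ← hw]
  exact Finset.single_le_sum (f := fun z => |c x z + p z|) (fun _ _ => abs_nonneg _)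
    (Finset.mem_univ w)

/-- First-order condition of the dual problem in the direction `-e_z`. -/
theorem le_measureReal_setOf_lt_lowerEnvelope_add [Nonempty ι] [IsFiniteMeasure μ]
    (hc : ∀ z, Measurable fun x => c x z) (hint : ∀ z, Integrable (fun x => c x z) μ)
    {r : ι → ℝ} (hp : ∀ q : ι → ℝ, ∫ x, lowerEnvelope c q x ∂μ - ∑ z, q z * r z ≤
      ∫ x, lowerEnvelope c p x ∂μ - ∑ z, p z * r z)
    (z : ι) {ε : ℝ} (hε : 0 < ε) :
    r z ≤ μ.real {x | c x z + p z < lowerEnvelope c p x + ε} := by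
  classical
  set S := {x | c x z + p z < lowerEnvelope c p x + ε}
  set q := p - Pi.single z ε
  have hS : MeasurableSet S :=
    measurableSet_lt ((hc z).add_const _) ((measurable_lowerEnvelope c p hc).add_const _)
  have hq : ∑ w, q w * r w = ∑ w, p w * r w - ε * r z := by
    simp [q, sub_mul, Finset.sum_sub_distrib, Pi.single_apply]
  refine le_of_mul_le_mul_left ?_ hε
  calc ε * r z
      ≤ ∫ x, lowerEnvelope c p x ∂μ - ∫ x, lowerEnvelope c q x ∂μ := by linarith [hp q]
    _ = ∫ x, (lowerEnvelope c p x - lowerEnvelope c q x) ∂μ :=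
      (integral_sub (integrable_lowerEnvelope c p hint) (integrable_lowerEnvelope c q hint)).symm
    _ ≤ ∫ x, S.indicator (fun _ => ε) x ∂μ :=
      integral_mono ((integrable_lowerEnvelope c p hint).sub (integrable_lowerEnvelope c q hint))
        ((integrable_const ε).indicator hS)
        (lowerEnvelope_sub_lowerEnvelope_sub_single_le c p hε.le z)
    _ = ε * μ.real S := by rw [integral_indicator_const _ hS, smul_eq_mul, mul_comm]

theorem le_measureReal_argminSet [Nonempty ι] [IsFiniteMeasure μ]
    (hc : ∀ z, Measurable fun x => c x z) (hint : ∀ z, Integrable (fun x => c x z) μ)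
    {r : ι → ℝ} (hp : ∀ q : ι → ℝ, ∫ x, lowerEnvelope c q x ∂μ - ∑ z, q z * r z ≤
      ∫ x, lowerEnvelope c p x ∂μ - ∑ z, p z * r z)
    (z : ι) : r z ≤ μ.real (argminSet c p z) := by
  have hA : argminSet c p z = {x | c x z + p z - lowerEnvelope c p x ≤ 0} := by
    ext x
    rw [mem_argminSet_iff_le, mem_ofPred_eq, sub_nonpos]
  rw [hA]
  refine ge_of_tendsto' (tendsto_measureReal_setOf_lt_one_div_add_one
    (((hc z).add_const _).sub (measurable_lowerEnvelope c p hc))) fun n => ?_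
  simpa only [sub_lt_iff_lt_add'] using
    le_measureReal_setOf_lt_lowerEnvelope_add c p hc hint hp z Nat.one_div_pos_of_nat

theorem sum_restrict_argminSet [Nonempty ι] (hc : ∀ z, Measurable fun x => c x z)
    (hd : Pairwise (AEDisjoint μ on argminSet c p)) :
    ∑ z, μ.restrict (argminSet c p z) = μ := by
  rw [← Measure.sum_fintype, ← Measure.restrict_iUnion_ae hd
    fun z => (measurableSet_argminSet c p hc z).nullMeasurableSet, iUnion_argminSet,
    Measure.restrict_univ]

theorem measure_argminSet_eq [IsProbabilityMeasure μ]
    (hcells : ∑ z, μ.restrict (argminSet c p z) = μ) {r : ι → ℝ} (hr : ∑ z, r z = 1)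
    (hle : ∀ z, r z ≤ μ.real (argminSet c p z)) (z : ι) :
    μ (argminSet c p z) = ENNReal.ofReal (r z) := by
  have htotal : ∑ z, μ.real (argminSet c p z) = ∑ z, r z := by
    have := congrArg (fun ν : Measure X => ν univ) hcells
    simp only [Measure.coe_finsetSum, Finset.sum_apply, Measure.restrict_apply_univ,
      measure_univ] at this
    simp only [measureReal_def, ← ENNReal.toReal_sum fun z _ => measure_ne_top μ _, this, hr,
      ENNReal.toReal_one]
  rw [(Finset.sum_eq_sum_iff_of_le fun z _ => hle z).1 htotal.symm z (Finset.mem_univ z),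
    ofReal_measureReal]

theorem sum_integral_sub_lowerEnvelope [Nonempty ι] [IsFiniteMeasure μ]
    (hint : ∀ z, Integrable (fun x => c x z) μ) {ρ : ι → Measure X} (hρ : ∑ z, ρ z = μ) :
    ∑ z, ∫ x, (c x z + p z - lowerEnvelope c p x) ∂ρ z =
      ∑ z, ∫ x, c x z ∂ρ z + ∑ z, p z * (ρ z).real univ - ∫ x, lowerEnvelope c p x ∂μ := by
  have hle z : ρ z ≤ μ := Measure.le_of_finset_sum_eq hρ (Finset.mem_univ z)
  have _ z : IsFiniteMeasure (ρ z) := isFiniteMeasure_of_le μ (hle z)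
  have hint' z w : Integrable (fun x => c x w) (ρ z) := (hint w).mono_measure (hle z)
  have hterm z : ∫ x, (c x z + p z - lowerEnvelope c p x) ∂ρ z =
      ∫ x, c x z ∂ρ z + p z * (ρ z).real univ - ∫ x, lowerEnvelope c p x ∂ρ z := by
    have hshift : Integrable (fun x => c x z + p z) (ρ z) := (hint' z z).add (integrable_const _)
    rw [integral_sub hshift (integrable_lowerEnvelope c p (hint' z)),
      integral_add (hint' z z) (integrable_const _), integral_const, smul_eq_mul, mul_comm]
  rw [Finset.sum_congr rfl fun z _ => hterm z, Finset.sum_sub_distrib, Finset.sum_add_distrib,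
    ← hρ, integral_finsetSum_measure fun z _ => integrable_lowerEnvelope c p (hint' z)]

theorem ae_mem_argminSet_of_integral_eq_zero [Nonempty ι] {ρ : Measure X} [IsFiniteMeasure ρ]
    (hint : ∀ z, Integrable (fun x => c x z) ρ) {z : ι}
    (h : ∫ x, (c x z + p z - lowerEnvelope c p x) ∂ρ = 0) : ∀ᵐ x ∂ρ, x ∈ argminSet c p z := by
  have hnonneg : 0 ≤ fun x => c x z + p z - lowerEnvelope c p x := fun x =>
    sub_nonneg.2 (lowerEnvelope_le c p x z)
  filter_upwards [(integral_eq_zero_iff_of_nonneg hnonneg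
    (((hint z).add (integrable_const _)).sub (integrable_lowerEnvelope c p hint))).1 h] with x hx
  exact sub_eq_zero.1 hx

/-- The total gap of `ρ` is at most that of the cell partition, which is zero. -/
theorem ae_mem_argminSet_of_cost_le [Nonempty ι] [IsFiniteMeasure μ]
    (hint : ∀ z, Integrable (fun x => c x z) μ)
    (hcells : ∑ z, μ.restrict (argminSet c p z) = μ) {ρ : ι → Measure X} (hρ : ∑ z, ρ z = μ)
    (hmass : ∀ z, ρ z univ = μ (argminSet c p z))
    (hcost : ∑ z, ∫ x, c x z ∂ρ z ≤ ∑ z, ∫ x, c x z ∂μ.restrict (argminSet c p z)) (z : ι) :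
    ∀ᵐ x ∂ρ z, x ∈ argminSet c p z := by
  have hle z : ρ z ≤ μ := Measure.le_of_finset_sum_eq hρ (Finset.mem_univ z)
  have _ z : IsFiniteMeasure (ρ z) := isFiniteMeasure_of_le μ (hle z)
  have hgap := sum_integral_sub_lowerEnvelope c p hint hρ
  have hgap_cells := sum_integral_sub_lowerEnvelope c p hint hcells
  simp only [integral_restrict_argminSet_sub_lowerEnvelope, Finset.sum_const_zero,
    measureReal_def, Measure.restrict_apply_univ] at hgap_cells
  simp only [measureReal_def, hmass] at hgap
  have hnonneg : ∀ z ∈ Finset.univ, 0 ≤ ∫ x, (c x z + p z - lowerEnvelope c p x) ∂ρ z :=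
    fun z _ => integral_nonneg fun x => sub_nonneg.2 (lowerEnvelope_le c p x z)
  have hzero := (Finset.sum_eq_zero_iff_of_nonneg hnonneg).1
    (le_antisymm (by linarith) (Finset.sum_nonneg hnonneg)) z (Finset.mem_univ z)
  exact ae_mem_argminSet_of_integral_eq_zero c p (fun w => (hint w).mono_measure (hle z)) hzero

end FiniteIndex

theorem stmt_9_general
    {X : Type*} [TopologicalSpace X] [MeasurableSpace X] [BorelSpace X]
    {ι : Type*} [Fintype ι] [Nonempty ι]
    (μ : Measure X) [IsProbabilityMeasure μ]
    (c1 : X → ι → ℝ)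
    (hc1 : ∀ z, Continuous fun x => c1 x z) (hb1 : ∀ z, ∃ M, ∀ x, |c1 x z| ≤ M)
    (hlevel : ∀ (t : ℝ) (z z' : ι), z ≠ z' → μ {x | c1 x z - c1 x z' = t} = 0)
    (r : ι → ℝ) (hr1 : ∑ z, r z = 1)
    (p0 : ι → ℝ)
    (hp0 : ∀ p : ι → ℝ,
      (∫ x, (⨅ z, c1 x z + p z) ∂μ) - ∑ z, p z * r z
        ≤ (∫ x, (⨅ z, c1 x z + p0 z) ∂μ) - ∑ z, p0 z * r z)
    (μv : ι → Measure X)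
    (hsum : (∑ z, μv z) = μ)
    (hmass : ∀ z, μv z Set.univ = ENNReal.ofReal (r z))
    (hmin : ∀ μv' : ι → Measure X,
      (∑ z, μv' z) = μ → (∀ z, μv' z Set.univ = ENNReal.ofReal (r z)) →
      (∑ z, ∫ x, c1 x z ∂(μv z)) ≤ ∑ z, ∫ x, c1 x z ∂(μv' z)) :
    ∀ z : ι, μv z = μ.restrict {x : X | c1 x z + p0 z = ⨅ w, (c1 x w + p0 w)} := by
  have hmeas z : Measurable fun x => c1 x z := (hc1 z).measurable
  have hint z : Integrable (fun x => c1 x z) μ :=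
    have ⟨M, hM⟩ := hb1 z
    .of_bound (hmeas z).aestronglyMeasurable M (ae_of_all _ hM)
  have hcells := sum_restrict_argminSet c1 p0 hmeas (aedisjoint_argminSet c1 p0 hlevel)
  have hcell_mass : ∀ z, μ (argminSet c1 p0 z) = ENNReal.ofReal (r z) :=
    measure_argminSet_eq c1 p0 hcells hr1 (le_measureReal_argminSet c1 p0 hmeas hint hp0)
  have hμv_mass z : μv z univ = μ (argminSet c1 p0 z) := (hmass z).trans (hcell_mass z).symm
  have hconc := ae_mem_argminSet_of_cost_le c1 p0 hint hcells hsum hμv_mass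
    (hmin _ hcells fun z => by rw [Measure.restrict_apply_univ, hcell_mass])
  exact fun z => Measure.eq_restrict_of_le_of_ae_mem
    (Measure.le_of_finset_sum_eq hsum (Finset.mem_univ z)) (hconc z) (hμv_mass z)

/-- Under Assumption (a), if `p₀` maximizes `p ↦ Ξ_μ(p) − Σ_z p_z r_z`
then every minimizing partition `(μ_z) ∈ 𝒫_X^r(μ)` of `Σ_z ∫ c¹(x,z) dμ_z` satisfies
`μ_z = μ` restricted to `A_z(p₀)`; in particular the minimizer is a unique strong
partition. -/
theorem stmt_9
    {X : Type*} [TopologicalSpace X] [PolishSpace X] [MeasurableSpace X] [BorelSpace X]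
    {ι : Type*} [Fintype ι] [Nonempty ι]
    (μ : Measure X) [IsProbabilityMeasure μ]
    (c1 : X → ι → ℝ)
    (hc1 : ∀ z, Continuous fun x => c1 x z) (hb1 : ∀ z, ∃ M, ∀ x, |c1 x z| ≤ M)
    (hatomless : ∀ x : X, μ {x} = 0)
    (hlevel : ∀ (t : ℝ) (z z' : ι), z ≠ z' → μ {x | c1 x z - c1 x z' = t} = 0)
    (r : ι → ℝ) (hr : ∀ z, 0 ≤ r z) (hr1 : ∑ z, r z = 1)
    (p0 : ι → ℝ)
    (hp0 : ∀ p : ι → ℝ,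
      (∫ x, (⨅ z, c1 x z + p z) ∂μ) - ∑ z, p z * r z
        ≤ (∫ x, (⨅ z, c1 x z + p0 z) ∂μ) - ∑ z, p0 z * r z)
    (μv : ι → Measure X)
    (hsum : (∑ z, μv z) = μ)
    (hmass : ∀ z, μv z Set.univ = ENNReal.ofReal (r z))
    (hmin : ∀ μv' : ι → Measure X,
      (∑ z, μv' z) = μ → (∀ z, μv' z Set.univ = ENNReal.ofReal (r z)) →
      (∑ z, ∫ x, c1 x z ∂(μv z)) ≤ ∑ z, ∫ x, c1 x z ∂(μv' z)) :
    ∀ z : ι, μv z = μ.restrict {x : X | c1 x z + p0 z = ⨅ w, (c1 x w + p0 w)} :=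
  stmt_9_general μ c1 hc1 hb1 hlevel r hr1 p0 hp0 μv hsum hmass hmin
end

section
/- Let μ, ν be Borel probability measures on ℝ^d with finite second moments, let π be any coupling of μ and ν, and let λ := M_#π be the pushforward of π under the midpoint map M(x,y) := (x+y)/2. Then for every nonempty finite set Z_m ⊂ ℝ^d: c^{Z_m}(μ,ν) ≤ ∫ |x−y|² dπ(x,y) + 4 ∫ min_{z∈Z_m} |w−z|² dλ(w). In particular, if π is optimal for the quadratic cost, then c^{Z_m}(μ,ν) − c(μ,ν) ≤ 4 ∫ min_{z∈Z_m} |w−z|² dλ(w). -/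
/-! For every `z`, the parallelogram law applied to `x - z` and `y - z` gives
`2 (|x - z|² + |y - z|²) = |x - y|² + 4 |(x + y)/2 - z|²`. Minimising over `z ∈ Z_m` yields
`c^{Z_m}(x, y) = |x - y|² + 4 min_z |M(x, y) - z|²`, so integrating against `π` (both terms are
integrable thanks to the second moments) computes the `c^{Z_m}`-cost of the coupling `π` as the
right-hand side, which bounds `c^{Z_m}(μ, ν)` from above. -/

open MeasureTheory

/-- Kantorovich optimal transport cost between `μ` and `ν` for the cost `c`. -/
noncomputable def kant {X Y : Type*} [MeasurableSpace X] [MeasurableSpace Y]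
    (μ : Measure X) (ν : Measure Y) (c : X → Y → ℝ) : ℝ :=
  sInf {t : ℝ | ∃ π : Measure (X × Y), IsProbabilityMeasure π ∧
    π.map Prod.fst = μ ∧ π.map Prod.snd = ν ∧ t = ∫ q, c q.1 q.2 ∂π}

section Midpoint

variable {E : Type*} [NormedAddCommGroup E] [InnerProductSpace ℝ E]

theorem two_mul_norm_sub_sq_add_norm_sub_sq (x y z : E) :
    2 * (‖x - z‖ ^ 2 + ‖y - z‖ ^ 2) = ‖x - y‖ ^ 2 + 4 * ‖(2 : ℝ)⁻¹ • (x + y) - z‖ ^ 2 := by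
  have h := parallelogram_law_with_norm ℝ (x - z) (y - z)
  have hsub : x - z - (y - z) = x - y := by abel
  have hadd : x - z + (y - z) = (2 : ℝ) • ((2 : ℝ)⁻¹ • (x + y) - z) := by module
  rw [hsub, hadd, norm_smul, Real.norm_two, mul_pow] at h
  linarith

theorem two_mul_iInf_norm_sub_sq_add_norm_sub_sq {ι : Type*} [Finite ι] [Nonempty ι]
    (z : ι → E) (x y : E) :
    2 * ⨅ i, (‖x - z i‖ ^ 2 + ‖y - z i‖ ^ 2)
      = ‖x - y‖ ^ 2 + 4 * ⨅ i, ‖(2 : ℝ)⁻¹ • (x + y) - z i‖ ^ 2 := by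
  rw [Real.mul_iInf_of_nonneg zero_le_two, Real.mul_iInf_of_nonneg zero_le_four]
  simp_rw [two_mul_norm_sub_sq_add_norm_sub_sq]
  exact ((OrderIso.addLeft _).map_ciInf (Set.finite_range _).bddBelow).symm

end Midpoint

section Integrability

variable {α E : Type*} [MeasurableSpace α] {μ : Measure α} [NormedAddCommGroup E]

theorem memLp_two_of_integrable_sq_norm_map [MeasurableSpace E] [OpensMeasurableSpace E]
    [SecondCountableTopology E] {f : α → E} (hf : AEMeasurable f μ)
    (h : Integrable (fun x => ‖x‖ ^ 2) (μ.map f)) : MemLp f 2 μ :=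
  ((memLp_two_iff_integrable_sq_norm aestronglyMeasurable_id).2 h).comp_of_map hf

theorem integrable_iInf_norm_sub_sq [IsFiniteMeasure μ] {ι : Type*} [Finite ι] [Nonempty ι]
    {f : α → E} (hf : MemLp f 2 μ) (z : ι → E) :
    Integrable (fun a => ⨅ i, ‖f a - z i‖ ^ 2) μ := by
  have hint : ∀ i, Integrable (fun a => ‖f a - z i‖ ^ 2) μ := fun i =>
    (hf.sub (memLp_const (z i))).integrable_norm_pow two_ne_zero
  obtain ⟨i₀⟩ := ‹Nonempty ι›
  refine (hint i₀).mono' (AEMeasurable.iInf fun i => (hint i).aemeasurable).aestronglyMeasurable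
    (ae_of_all _ fun a => ?_)
  rw [Real.norm_of_nonneg (Real.iInf_nonneg fun i => by positivity)]
  exact ciInf_le (Set.finite_range _).bddBelow i₀

end Integrability

theorem kant_le_integral {X Y : Type*} [MeasurableSpace X] [MeasurableSpace Y]
    {μ : Measure X} {ν : Measure Y} {c : X → Y → ℝ} (hc : ∀ x y, 0 ≤ c x y)
    {π : Measure (X × Y)} [IsProbabilityMeasure π]
    (hπ1 : π.map Prod.fst = μ) (hπ2 : π.map Prod.snd = ν) :
    kant μ ν c ≤ ∫ q, c q.1 q.2 ∂π :=
  csInf_le ⟨0, by rintro _ ⟨π', -, -, -, rfl⟩; exact integral_nonneg fun q => hc _ _⟩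
    ⟨π, inferInstance, hπ1, hπ2, rfl⟩

/-- for any coupling `π` of `μ, ν` with midpoint pushforward `λ = M_#π`,
`c^{Z_m}(μ,ν) ≤ ∫|x−y|² dπ + 4∫ min_{z∈Z_m}|w−z|² dλ`; if `π` is optimal for the
quadratic cost then `c^{Z_m}(μ,ν) − c(μ,ν) ≤ 4∫ min_{z∈Z_m}|w−z|² dλ`. -/
theorem stmt_18
    (d : ℕ)
    (μ ν : Measure (EuclideanSpace ℝ (Fin d)))
    [IsProbabilityMeasure μ] [IsProbabilityMeasure ν]
    (hmomμ : Integrable (fun x : EuclideanSpace ℝ (Fin d) => ‖x‖ ^ 2) μ)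
    (hmomν : Integrable (fun y : EuclideanSpace ℝ (Fin d) => ‖y‖ ^ 2) ν)
    (π : Measure (EuclideanSpace ℝ (Fin d) × EuclideanSpace ℝ (Fin d)))
    [IsProbabilityMeasure π]
    (hπ1 : π.map Prod.fst = μ) (hπ2 : π.map Prod.snd = ν)
    (lam : Measure (EuclideanSpace ℝ (Fin d)))
    (hlam : lam = π.map (fun q => (2 : ℝ)⁻¹ • (q.1 + q.2)))
    (Zm : Finset (EuclideanSpace ℝ (Fin d))) (hZm : Zm.Nonempty) :
    kant μ ν (fun x y => 2 * ⨅ z : Zm, (‖x - (z : EuclideanSpace ℝ (Fin d))‖ ^ 2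
        + ‖y - (z : EuclideanSpace ℝ (Fin d))‖ ^ 2))
      ≤ (∫ q, ‖q.1 - q.2‖ ^ 2 ∂π)
        + 4 * ∫ w, (⨅ z : Zm, ‖w - (z : EuclideanSpace ℝ (Fin d))‖ ^ 2) ∂lam ∧
    ((∫ q, ‖q.1 - q.2‖ ^ 2 ∂π) = kant μ ν (fun x y => ‖x - y‖ ^ 2) →
      kant μ ν (fun x y => 2 * ⨅ z : Zm, (‖x - (z : EuclideanSpace ℝ (Fin d))‖ ^ 2
          + ‖y - (z : EuclideanSpace ℝ (Fin d))‖ ^ 2))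
        - kant μ ν (fun x y => ‖x - y‖ ^ 2)
        ≤ 4 * ∫ w, (⨅ z : Zm, ‖w - (z : EuclideanSpace ℝ (Fin d))‖ ^ 2) ∂lam) := by
  have := hZm.coe_sort
  have hX : MemLp Prod.fst 2 π :=
    memLp_two_of_integrable_sq_norm_map measurable_fst.aemeasurable (hπ1 ▸ hmomμ)
  have hY : MemLp Prod.snd 2 π :=
    memLp_two_of_integrable_sq_norm_map measurable_snd.aemeasurable (hπ2 ▸ hmomν)
  have hM : MemLp (fun q => (2 : ℝ)⁻¹ • (q.1 + q.2)) 2 π := (hX.add hY).const_smul (2 : ℝ)⁻¹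
  have hD : Integrable (fun q => ‖q.1 - q.2‖ ^ 2) π :=
    (hX.sub hY).integrable_norm_pow two_ne_zero
  have hcost : ∫ q, 2 * ⨅ z : Zm, (‖q.1 - (z : EuclideanSpace ℝ (Fin d))‖ ^ 2
        + ‖q.2 - (z : EuclideanSpace ℝ (Fin d))‖ ^ 2) ∂π
      = (∫ q, ‖q.1 - q.2‖ ^ 2 ∂π)
        + 4 * ∫ w, (⨅ z : Zm, ‖w - (z : EuclideanSpace ℝ (Fin d))‖ ^ 2) ∂lam := by
    simp_rw [two_mul_iInf_norm_sub_sq_add_norm_sub_sq (Subtype.val : Zm → _)]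
    rw [integral_add hD ((integrable_iInf_norm_sub_sq hM Subtype.val).const_mul 4),
      integral_const_mul, hlam,
      integral_map (by fun_prop) (Measurable.iInf fun z => by fun_prop).aestronglyMeasurable]
  have hbound := (kant_le_integral (c := fun x y => 2 * ⨅ z : Zm,
      (‖x - (z : EuclideanSpace ℝ (Fin d))‖ ^ 2 + ‖y - (z : EuclideanSpace ℝ (Fin d))‖ ^ 2))
    (fun x y => mul_nonneg zero_le_two (Real.iInf_nonneg fun _ => by positivity)) hπ1 hπ2).trans_eq
    hcost
  exact ⟨hbound, fun hopt => by linarith⟩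
end
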